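/- Let m and n be positive integers and let R = {v ∈ V(HD(m,n)) : deg(v) = 4} be the set of degree-4 vertices of the Hopi rectangle graph HD(m,n). Then for every nonempty subset R' ⊆ R, there exist at least four pairwise distinct vertices x_1, x_2, x_3, x_4 ∈ V(HD(m,n)) \ R' such that each x_i has exactly one neighbor in R', i.e., |N_{HD(m,n)}(x_i) ∩ R'| = 1 for i = 1, 2, 3, 4. -/

import Mathlib

/-- The vertex set of the Hopi rectangle graph of order `(m,n)`: the set of
integer lattice points `(i,j)` with `m-1 ≤ i+j ≤ 2n+m-1` and `|i-j| ≤ m`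
(realized as a `Finset` by filtering a sufficiently large box). -/
noncomputable def HDverts (m n : ℕ) : Finset (ℤ × ℤ) :=
  (Finset.Icc (-2 : ℤ) (2*n + 2*m) ×ˢ Finset.Icc (-2 : ℤ) (2*n + 2*m)).filter
    (fun p => (m : ℤ) - 1 ≤ p.1 + p.2 ∧ p.1 + p.2 ≤ 2*n + m - 1 ∧ |p.1 - p.2| ≤ m)

/-- The Hopi rectangle graph `HD(m,n)`: vertices are the points of `HDverts m n`,
and `(i,j)` is adjacent to `(i',j')` iff `|i - i'| + |j - j'| = 1`. -/
def HD (m n : ℕ) : SimpleGraph {p : ℤ × ℤ // p ∈ HDverts m n} where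
  Adj u v := |u.val.1 - v.val.1| + |u.val.2 - v.val.2| = 1
  symm := by
    refine ⟨?_⟩
    intro u v h
    rw [abs_sub_comm v.val.1 u.val.1, abs_sub_comm v.val.2 u.val.2]
    exact h
  loopless := by refine ⟨?_⟩; intro u h; simp at h

/-!
Every vertex of `R'` has all four lattice neighbours in the graph. For a lattice direction `d`,
take `v ∈ R'` maximising `⟪d, ·⟫` on `R'` and step to `x = v + d`: then `x` and its three
lattice neighbours other than `v` lie strictly beyond `v` in direction `d`, hence outside `R'`,
so `v` is the only neighbour of `x` in `R'`. The four directions give four distinct vertices,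
since each such `x` determines its direction as `x - v`.
-/

def latticeSteps : Finset (ℤ × ℤ) := {(1, 0), (-1, 0), (0, 1), (0, -1)}

lemma mem_latticeSteps {d : ℤ × ℤ} : d ∈ latticeSteps ↔ |d.1| + |d.2| = 1 := by
  obtain ⟨a, b⟩ := d
  simp only [latticeSteps, Finset.mem_insert, Finset.mem_singleton, Prod.mk.injEq]
  rcases abs_cases a with ⟨ha, _⟩ | ⟨ha, _⟩ <;> rcases abs_cases b with ⟨hb, _⟩ | ⟨hb, _⟩ <;> omega

lemma card_latticeSteps : latticeSteps.card = 4 := rfl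

def latticeDot (d p : ℤ × ℤ) : ℤ := d.1 * p.1 + d.2 * p.2

lemma latticeDot_add (d p q : ℤ × ℤ) :
    latticeDot d (p + q) = latticeDot d p + latticeDot d q := by
  simp only [latticeDot, Prod.fst_add, Prod.snd_add]; ring

lemma latticeDot_self_of_mem_latticeSteps {d : ℤ × ℤ} (hd : d ∈ latticeSteps) :
    latticeDot d d = 1 := by
  have : ∀ d ∈ latticeSteps, latticeDot d d = 1 := by decide
  exact this d hd

lemma latticeDot_nonneg_of_mem_latticeSteps {c d : ℤ × ℤ} (hc : c ∈ latticeSteps)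
    (hd : d ∈ latticeSteps) (hcd : c ≠ -d) : 0 ≤ latticeDot d c := by
  have : ∀ c ∈ latticeSteps, ∀ d ∈ latticeSteps, c ≠ -d → 0 ≤ latticeDot d c := by decide
  exact this c hc d hd hcd

structure IsSquareLatticeEmbedding {V : Type*} (G : SimpleGraph V) (pos : V → ℤ × ℤ) : Prop where
  injective : Function.Injective pos
  adj_iff : ∀ u v, G.Adj u v ↔ pos u - pos v ∈ latticeSteps

namespace IsSquareLatticeEmbedding

variable {V : Type*} {G : SimpleGraph V} {pos : V → ℤ × ℤ}

lemma exists_pos_eq_add_of_ncard_neighborSet_eq_four (hG : IsSquareLatticeEmbedding G pos)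
    {v : V} (hv : (G.neighborSet v).ncard = 4) {d : ℤ × ℤ} (hd : d ∈ latticeSteps) :
    ∃ x, pos x = pos v + d := by
  set step := fun u => pos u - pos v
  have hsub : step '' G.neighborSet v ⊆ latticeSteps := by
    rintro _ ⟨u, hu, rfl⟩
    exact (hG.adj_iff u v).mp hu.symm
  have hcard : (latticeSteps : Set (ℤ × ℤ)).ncard ≤ (step '' G.neighborSet v).ncard := by
    rw [Set.ncard_image_of_injective _ fun a b h => hG.injective (sub_left_inj.mp h), hv,
      Set.ncard_coe_finset, card_latticeSteps]
  have hd' : d ∈ step '' G.neighborSet v := by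
    rw [Set.eq_of_subset_of_ncard_le hsub hcard (Finset.finite_toSet _)]
    exact hd
  obtain ⟨x, -, hx⟩ := hd'
  exact ⟨x, eq_add_of_sub_eq' hx⟩

lemma neighborSet_inter_eq_singleton_of_isMaxOn (hG : IsSquareLatticeEmbedding G pos)
    {R' : Set V} {v x : V} {d : ℤ × ℤ} (hd : d ∈ latticeSteps) (hv : v ∈ R')
    (hmax : IsMaxOn (fun u => latticeDot d (pos u)) R' v) (hx : pos x = pos v + d) :
    x ∉ R' ∧ G.neighborSet x ∩ R' = {v} := by
  have hdd := latticeDot_self_of_mem_latticeSteps hd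
  refine ⟨fun hxR => ?_, Set.eq_singleton_iff_unique_mem.mpr ⟨⟨?_, hv⟩, ?_⟩⟩
  · have := isMaxOn_iff.mp hmax x hxR
    simp only [hx, latticeDot_add] at this
    omega
  · rw [SimpleGraph.mem_neighborSet, hG.adj_iff, hx]
    simpa using hd
  · rintro u ⟨hxu, huR⟩
    set c := pos u - pos x
    have hc : c ∈ latticeSteps := (hG.adj_iff u x).mp hxu.symm
    have hu : pos u = pos v + d + c := by rw [← hx, add_sub_cancel]
    by_contra hne
    have hcd : c ≠ -d := fun h => hne (hG.injective (by rw [hu, h]; abel))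
    have := isMaxOn_iff.mp hmax u huR
    simp only [hu, latticeDot_add] at this
    have := latticeDot_nonneg_of_mem_latticeSteps hc hd hcd
    omega

lemma exists_neighborSet_inter_eq_singleton (hG : IsSquareLatticeEmbedding G pos) {R' : Set V}
    (hfin : R'.Finite) (hne : R'.Nonempty) (hdeg : R' ⊆ {v | (G.neighborSet v).ncard = 4})
    {d : ℤ × ℤ} (hd : d ∈ latticeSteps) :
    ∃ x v, pos x = pos v + d ∧ x ∉ R' ∧ G.neighborSet x ∩ R' = {v} := by
  obtain ⟨v, hv, hmax⟩ := Set.exists_max_image R' (fun u => latticeDot d (pos u)) hfin hne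
  obtain ⟨x, hx⟩ := hG.exists_pos_eq_add_of_ncard_neighborSet_eq_four (hdeg hv) hd
  exact ⟨x, v, hx, hG.neighborSet_inter_eq_singleton_of_isMaxOn hd hv (isMaxOn_iff.mpr hmax) hx⟩

end IsSquareLatticeEmbedding

lemma SimpleGraph.ne_of_neighborSet_inter_eq_singleton {V : Type*} {G : SimpleGraph V}
    (pos : V → ℤ × ℤ) {R' : Set V} {x y v w : V} {d e : ℤ × ℤ} (hx : pos x = pos v + d)
    (hNx : G.neighborSet x ∩ R' = {v}) (hy : pos y = pos w + e)
    (hNy : G.neighborSet y ∩ R' = {w}) (hde : d ≠ e) : x ≠ y := by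
  rintro rfl
  obtain rfl : v = w := Set.singleton_eq_singleton_iff.mp (hNx.symm.trans hNy)
  exact hde (add_left_cancel (hx.symm.trans hy))

lemma isSquareLatticeEmbedding_HD (m n : ℕ) : IsSquareLatticeEmbedding (HD m n) Subtype.val :=
  ⟨Subtype.val_injective, fun u v => (mem_latticeSteps (d := u.val - v.val)).symm⟩

theorem HD_degree_four_boundary_general (m n : ℕ)
    (R' : Set {p : ℤ × ℤ // p ∈ HDverts m n})
    (hsub : R' ⊆ {v | ((HD m n).neighborSet v).ncard = 4})
    (hne : R'.Nonempty) :
    ∃ x₁ x₂ x₃ x₄ : {p : ℤ × ℤ // p ∈ HDverts m n},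
      x₁ ≠ x₂ ∧ x₁ ≠ x₃ ∧ x₁ ≠ x₄ ∧ x₂ ≠ x₃ ∧ x₂ ≠ x₄ ∧ x₃ ≠ x₄ ∧
      x₁ ∉ R' ∧ x₂ ∉ R' ∧ x₃ ∉ R' ∧ x₄ ∉ R' ∧
      ((HD m n).neighborSet x₁ ∩ R').ncard = 1 ∧
      ((HD m n).neighborSet x₂ ∩ R').ncard = 1 ∧
      ((HD m n).neighborSet x₃ ∩ R').ncard = 1 ∧
      ((HD m n).neighborSet x₄ ∩ R').ncard = 1 := by
  have boundary {d : ℤ × ℤ} (hd : d ∈ latticeSteps) :=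
    (isSquareLatticeEmbedding_HD m n).exists_neighborSet_inter_eq_singleton
      (Set.toFinite R') hne hsub hd
  obtain ⟨x₁, v₁, hx₁, hx₁R, hN₁⟩ := boundary (d := (1, 0)) (by decide)
  obtain ⟨x₂, v₂, hx₂, hx₂R, hN₂⟩ := boundary (d := (-1, 0)) (by decide)
  obtain ⟨x₃, v₃, hx₃, hx₃R, hN₃⟩ := boundary (d := (0, 1)) (by decide)
  obtain ⟨x₄, v₄, hx₄, hx₄R, hN₄⟩ := boundary (d := (0, -1)) (by decide)
  have sep := @SimpleGraph.ne_of_neighborSet_inter_eq_singleton _ (HD m n) Subtype.val R'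
  refine ⟨x₁, x₂, x₃, x₄, sep hx₁ hN₁ hx₂ hN₂ (by decide), sep hx₁ hN₁ hx₃ hN₃ (by decide),
    sep hx₁ hN₁ hx₄ hN₄ (by decide), sep hx₂ hN₂ hx₃ hN₃ (by decide),
    sep hx₂ hN₂ hx₄ hN₄ (by decide), sep hx₃ hN₃ hx₄ hN₄ (by decide),
    hx₁R, hx₂R, hx₃R, hx₄R, ?_, ?_, ?_, ?_⟩ <;>
  simp only [hN₁, hN₂, hN₃, hN₄, Set.ncard_singleton]

/-- For any nonempty subset `R'` of the degree-4 vertices of `HD(m,n)`, there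
are at least four distinct vertices outside of `R'`, each having exactly one
neighbor in `R'`. -/
theorem HD_degree_four_boundary (m n : ℕ) (hm : 0 < m) (hn : 0 < n)
    (R' : Set {p : ℤ × ℤ // p ∈ HDverts m n})
    (hsub : R' ⊆ {v | ((HD m n).neighborSet v).ncard = 4})
    (hne : R'.Nonempty) :
    ∃ x₁ x₂ x₃ x₄ : {p : ℤ × ℤ // p ∈ HDverts m n},
      x₁ ≠ x₂ ∧ x₁ ≠ x₃ ∧ x₁ ≠ x₄ ∧ x₂ ≠ x₃ ∧ x₂ ≠ x₄ ∧ x₃ ≠ x₄ ∧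
      x₁ ∉ R' ∧ x₂ ∉ R' ∧ x₃ ∉ R' ∧ x₄ ∉ R' ∧
      ((HD m n).neighborSet x₁ ∩ R').ncard = 1 ∧
      ((HD m n).neighborSet x₂ ∩ R').ncard = 1 ∧
      ((HD m n).neighborSet x₃ ∩ R').ncard = 1 ∧
      ((HD m n).neighborSet x₄ ∩ R').ncard = 1 :=
  HD_degree_four_boundary_general m n R' hsub hne
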